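/- arXiv:2506.23410 — 2 statements merged into one kernel-verified Lean document; each statement's English description precedes it below -/
import Mathlib

section
/- Let Ω be a Hermitian positive definite n×n matrix with Cholesky decomposition Ω = L L^H, let X be an n×m complex matrix, and σ > 0. Then X (X^H Ω X + σ² I_m)^{-1} X^H = Ω^{-1} − σ² Ω^{-1} (X X^H + σ² Ω^{-1})^{-1} Ω^{-1}. -/
/-!
By the push-through identity `X (Y Ω X + c)⁻¹ = (X Y Ω + c)⁻¹ X`, and since `X Y Ω + c = B Ω` with
`B = X Y + c Ω⁻¹`, we get `X (Y Ω X + c)⁻¹ Y = Ω⁻¹ B⁻¹ X Y = Ω⁻¹ B⁻¹ (B - c Ω⁻¹)`. This holds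
over any commutative ring once `Ω`, `Y Ω X + c` and `B` are invertible, which positive
definiteness and `σ > 0` guarantee here.
-/

open Matrix
open scoped ComplexOrder

namespace Matrix

variable {α : Type*} [CommRing α] {n m : Type*} [Fintype n] [DecidableEq n]
  [Fintype m] [DecidableEq m]

theorem mul_inv_eq_inv_mul_of_mul_eq_mul {P : Matrix n n α} {Q : Matrix m m α}
    {X : Matrix n m α} (hP : IsUnit P) (hQ : IsUnit Q) (h : P * X = X * Q) :
    X * Q⁻¹ = P⁻¹ * X := by
  rw [isUnit_iff_isUnit_det] at hP hQ
  calc X * Q⁻¹ = P⁻¹ * (P * X) * Q⁻¹ := by rw [nonsing_inv_mul_cancel_left _ _ hP]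
    _ = P⁻¹ * X := by rw [h, ← Matrix.mul_assoc, mul_nonsing_inv_cancel_right _ _ hQ]

theorem mul_inv_mul_add_smul_one (X : Matrix n m α) (Y : Matrix m n α) (c : α)
    (hXY : IsUnit (X * Y + c • 1)) (hYX : IsUnit (Y * X + c • 1)) :
    X * (Y * X + c • 1)⁻¹ = (X * Y + c • 1)⁻¹ * X :=
  mul_inv_eq_inv_mul_of_mul_eq_mul hXY hYX <| by
    simp only [Matrix.add_mul, Matrix.mul_add, Matrix.mul_assoc, smul_mul, Matrix.mul_smul,
      Matrix.one_mul, Matrix.mul_one]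

theorem mul_inv_add_smul_one_mul_eq_inv_sub (Ω : Matrix n n α) (X : Matrix n m α)
    (Y : Matrix m n α) (c : α) (hΩ : IsUnit Ω) (hA : IsUnit (Y * Ω * X + c • 1))
    (hB : IsUnit (X * Y + c • Ω⁻¹)) :
    X * (Y * Ω * X + c • 1)⁻¹ * Y = Ω⁻¹ - c • (Ω⁻¹ * (X * Y + c • Ω⁻¹)⁻¹ * Ω⁻¹) := by
  set B := X * Y + c • Ω⁻¹
  have hBΩ : X * (Y * Ω) + c • 1 = B * Ω := by
    rw [Matrix.add_mul, smul_mul, nonsing_inv_mul _ ((isUnit_iff_isUnit_det Ω).mp hΩ),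
      Matrix.mul_assoc]
  have hB' : IsUnit B.det := (isUnit_iff_isUnit_det B).mp hB
  calc X * (Y * Ω * X + c • 1)⁻¹ * Y = (B * Ω)⁻¹ * X * Y := by
        rw [mul_inv_mul_add_smul_one X (Y * Ω) c (hBΩ ▸ hB.mul hΩ) hA, hBΩ]
    _ = Ω⁻¹ * B⁻¹ * (B - c • Ω⁻¹) := by
        rw [mul_inv_rev, add_sub_cancel_right, Matrix.mul_assoc _ X Y]
    _ = Ω⁻¹ - c • (Ω⁻¹ * B⁻¹ * Ω⁻¹) := by
        rw [Matrix.mul_sub, nonsing_inv_mul_cancel_right _ _ hB', Matrix.mul_smul]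

end Matrix

theorem stmt1_general {n m : ℕ} (Ω : Matrix (Fin n) (Fin n) ℂ) (hΩ : Ω.PosDef)
    (X : Matrix (Fin n) (Fin m) ℂ) (σ : ℝ) (hσ : 0 < σ) :
    X * (Xᴴ * Ω * X + (σ ^ 2 : ℂ) • (1 : Matrix (Fin m) (Fin m) ℂ))⁻¹ * Xᴴ =
      Ω⁻¹ - (σ ^ 2 : ℂ) • (Ω⁻¹ * (X * Xᴴ + (σ ^ 2 : ℂ) • Ω⁻¹)⁻¹ * Ω⁻¹) := by
  have hσ2 : 0 < (σ ^ 2 : ℂ) := pow_pos (Complex.zero_lt_real.mpr hσ) 2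
  have hA : (Xᴴ * Ω * X + (σ ^ 2 : ℂ) • 1).PosDef :=
    .posSemidef_add (hΩ.posSemidef.conjTranspose_mul_mul_same X) (PosDef.one.smul hσ2)
  have hB : (X * Xᴴ + (σ ^ 2 : ℂ) • Ω⁻¹).PosDef :=
    .posSemidef_add (posSemidef_self_mul_conjTranspose X) (hΩ.inv.smul hσ2)
  exact mul_inv_add_smul_one_mul_eq_inv_sub Ω X Xᴴ _ hΩ.isUnit hA.isUnit hB.isUnit

theorem stmt1 {n m : ℕ} (Ω : Matrix (Fin n) (Fin n) ℂ) (hΩ : Ω.PosDef)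
    (L : Matrix (Fin n) (Fin n) ℂ) (hL : Ω = L * Lᴴ)
    (X : Matrix (Fin n) (Fin m) ℂ) (σ : ℝ) (hσ : 0 < σ) :
    X * (Xᴴ * Ω * X + (σ ^ 2 : ℂ) • (1 : Matrix (Fin m) (Fin m) ℂ))⁻¹ * Xᴴ =
      Ω⁻¹ - (σ ^ 2 : ℂ) • (Ω⁻¹ * (X * Xᴴ + (σ ^ 2 : ℂ) • Ω⁻¹)⁻¹ * Ω⁻¹) :=
  stmt1_general Ω hΩ X σ hσ
end

section
/- Let E be an m×m Hermitian positive definite matrix and B an m×p complex matrix. The function f(B,E) = −Tr(B^H E^{-1} B) is jointly concave in (B,E) over the set of pairs with E ≻ 0. Consequently, for any fixed point (B₀,E₀) with E₀ ≻ 0, f(B,E) ≤ Tr(E₀^{-1} B₀ B₀^H E₀^{-1} E) − 2 Re Tr(B₀^H E₀^{-1} B) + Tr(B₀^H E₀^{-1} B₀) − Tr(E₀^{-1} B₀ B₀^H). -/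
open Matrix
open scoped ComplexOrder

/-!
For `E ≻ 0` and every `Y`,
`Re Tr(Bᴴ E⁻¹ B) - (2 Re Tr(Yᴴ B) - Re Tr(Yᴴ E Y)) = Re Tr((E⁻¹B - Y)ᴴ E (E⁻¹B - Y)) ≥ 0`,
with equality at `Y = E⁻¹ B`. Hence `f(B, E) = -Re Tr(Bᴴ E⁻¹ B)` is the pointwise minimum over `Y`
of the functions `Re Tr(Yᴴ E Y) - 2 Re Tr(Yᴴ B)`, which are affine in `(B, E)`: this gives joint
concavity, and `Y = E₀⁻¹ B₀` gives the tangent-plane bound at `(B₀, E₀)`.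
-/

namespace Matrix

variable {𝕜 n p : Type*} [RCLike 𝕜] [Fintype n] [Fintype p]

lemma re_trace_conjTranspose (A : Matrix n n 𝕜) : RCLike.re Aᴴ.trace = RCLike.re A.trace := by
  rw [trace_conjTranspose, RCLike.star_def, RCLike.conj_re]

lemma re_trace_conjTranspose_mul (A : Matrix n p 𝕜) (B : Matrix p n 𝕜) :
    RCLike.re (Aᴴ * Bᴴ).trace = RCLike.re (B * A).trace := by
  rw [← conjTranspose_mul, re_trace_conjTranspose]

lemma PosSemidef.re_trace_nonneg {A : Matrix n n 𝕜} (hA : A.PosSemidef) :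
    0 ≤ RCLike.re A.trace :=
  (RCLike.nonneg_iff.mp hA.trace_nonneg).1

def traceMajorant (Y B : Matrix n p 𝕜) (E : Matrix n n 𝕜) : ℝ :=
  RCLike.re (Yᴴ * E * Y).trace - 2 * RCLike.re (Yᴴ * B).trace

lemma traceMajorant_add_smul (Y B₁ B₂ : Matrix n p 𝕜) (E₁ E₂ : Matrix n n 𝕜) (a b : ℝ) :
    traceMajorant Y ((a : 𝕜) • B₁ + (b : 𝕜) • B₂) ((a : 𝕜) • E₁ + (b : 𝕜) • E₂) =
      a * traceMajorant Y B₁ E₁ + b * traceMajorant Y B₂ E₂ := by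
  simp only [traceMajorant, Matrix.mul_add, Matrix.add_mul, Matrix.mul_smul, Matrix.smul_mul,
    trace_add, trace_smul, map_add, smul_eq_mul, RCLike.re_ofReal_mul]
  ring

lemma traceMajorant_mul_of_isHermitian {A : Matrix n n 𝕜} (hA : A.IsHermitian)
    (B₀ B : Matrix n p 𝕜) (E : Matrix n n 𝕜) :
    traceMajorant (A * B₀) B E =
      RCLike.re (A * B₀ * B₀ᴴ * A * E).trace - 2 * RCLike.re (B₀ᴴ * A * B).trace := by
  have hcycle : (B₀ᴴ * A * E * (A * B₀)).trace = (A * B₀ * B₀ᴴ * A * E).trace := by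
    rw [trace_mul_comm, Matrix.mul_assoc (A * B₀), Matrix.mul_assoc (A * B₀), Matrix.mul_assoc]
  rw [traceMajorant, conjTranspose_mul, hA.eq, hcycle, Matrix.mul_assoc B₀ᴴ]

variable [DecidableEq n]

lemma PosDef.neg_re_trace_le_traceMajorant {E : Matrix n n 𝕜} (hE : E.PosDef)
    (Y B : Matrix n p 𝕜) : -RCLike.re (Bᴴ * E⁻¹ * B).trace ≤ traceMajorant Y B E := by
  have hdet : IsUnit E.det := (isUnit_iff_isUnit_det E).mp hE.isUnit
  have hsq : (E⁻¹ * B - Y)ᴴ * E * (E⁻¹ * B - Y) =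
      Bᴴ * E⁻¹ * B - Bᴴ * Y - Yᴴ * B + Yᴴ * E * Y := by
    simp only [conjTranspose_sub, conjTranspose_mul, hE.isHermitian.inv.eq, Matrix.sub_mul,
      Matrix.mul_sub, Matrix.mul_assoc, mul_nonsing_inv_cancel_left _ _ hdet,
      nonsing_inv_mul_cancel_left _ _ hdet]
    abel
  have hnonneg := (hE.posSemidef.conjTranspose_mul_mul_same (E⁻¹ * B - Y)).re_trace_nonneg
  have hcross := re_trace_conjTranspose_mul B Yᴴ
  rw [hsq] at hnonneg
  simp only [conjTranspose_conjTranspose, trace_add, trace_sub, map_add, map_sub] at hnonneg hcross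
  unfold traceMajorant
  linarith

/-- For singular `E` both sides vanish, since then `E⁻¹ = 0`. -/
lemma traceMajorant_nonsing_inv_mul (B : Matrix n p 𝕜) (E : Matrix n n 𝕜) :
    traceMajorant (E⁻¹ * B) B E = -RCLike.re (Bᴴ * E⁻¹ * B).trace := by
  have hmid : (E⁻¹ * B)ᴴ * E * (E⁻¹ * B) = (E⁻¹ * B)ᴴ * B := by
    by_cases h : IsUnit E.det
    · rw [Matrix.mul_assoc, mul_nonsing_inv_cancel_left _ _ h]
    · simp [nonsing_inv_apply_not_isUnit _ h]
  have hconj := re_trace_conjTranspose_mul (E⁻¹ * B) Bᴴ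
  rw [conjTranspose_conjTranspose] at hconj
  rw [traceMajorant, hmid, hconj, Matrix.mul_assoc]
  ring

end Matrix

theorem stmt3 {m p : ℕ} :
    (∀ (B₁ B₂ : Matrix (Fin m) (Fin p) ℂ) (E₁ E₂ : Matrix (Fin m) (Fin m) ℂ),
      E₁.PosDef → E₂.PosDef → ∀ t : ℝ, 0 ≤ t → t ≤ 1 →
      t * (-(B₁ᴴ * E₁⁻¹ * B₁).trace.re) + (1 - t) * (-(B₂ᴴ * E₂⁻¹ * B₂).trace.re) ≤
        -((((t : ℂ) • B₁ + ((1 - t : ℝ) : ℂ) • B₂)ᴴ *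
            ((t : ℂ) • E₁ + ((1 - t : ℝ) : ℂ) • E₂)⁻¹ *
            ((t : ℂ) • B₁ + ((1 - t : ℝ) : ℂ) • B₂)).trace.re)) ∧
    (∀ (B B₀ : Matrix (Fin m) (Fin p) ℂ) (E E₀ : Matrix (Fin m) (Fin m) ℂ),
      E.PosDef → E₀.PosDef →
      -((Bᴴ * E⁻¹ * B).trace.re) ≤
        (E₀⁻¹ * B₀ * B₀ᴴ * E₀⁻¹ * E).trace.re - 2 * (B₀ᴴ * E₀⁻¹ * B).trace.re
          + (B₀ᴴ * E₀⁻¹ * B₀).trace.re - (E₀⁻¹ * B₀ * B₀ᴴ).trace.re) := by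
  constructor
  · intro B₁ B₂ E₁ E₂ hE₁ hE₂ t ht0 ht1
    set B := (t : ℂ) • B₁ + ((1 - t : ℝ) : ℂ) • B₂
    set E := (t : ℂ) • E₁ + ((1 - t : ℝ) : ℂ) • E₂
    have h₁ := hE₁.neg_re_trace_le_traceMajorant (E⁻¹ * B) B₁
    have h₂ := hE₂.neg_re_trace_le_traceMajorant (E⁻¹ * B) B₂
    have hE := (traceMajorant_add_smul (E⁻¹ * B) B₁ B₂ E₁ E₂ t (1 - t)).symm.trans
      (traceMajorant_nonsing_inv_mul B E)
    simp only [RCLike.re_to_complex] at h₁ h₂ hE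
    linarith [mul_le_mul_of_nonneg_left h₁ ht0, mul_le_mul_of_nonneg_left h₂ (sub_nonneg.2 ht1)]
  · intro B B₀ E E₀ hE hE₀
    have h := hE.neg_re_trace_le_traceMajorant (E₀⁻¹ * B₀) B
    rw [traceMajorant_mul_of_isHermitian hE₀.isHermitian.inv] at h
    have hcycle : (B₀ᴴ * E₀⁻¹ * B₀).trace = (E₀⁻¹ * B₀ * B₀ᴴ).trace := by
      rw [Matrix.mul_assoc, trace_mul_comm]
    simp only [RCLike.re_to_complex] at h
    linarith [congrArg Complex.re hcycle]
end
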